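/- For all integers n ≥ 2 and 0 ≤ k ≤ n-1, the rational number (1/2)·( C(n,k+1)·C(n+k+1,k+1) + C(n-1,k+1)·C(n+k,k+1) ) is a nonnegative integer, namely C(n,k+1)·C(n+k,k+1). -/

import Mathlib

/-!
With `a = k + 1`, passing from `n` to `n - 1` multiplies `C(n, a)` by `(n - a) / n`, and passing
from `n + k` to `n + k + 1` multiplies `C(n + k, a)` by `(n + k + 1) / n`. The two factors add up
to `2`, so the sum in question is exactly twice `C(n, a) · C(n + k, a)`.
-/

namespace Nat

theorem choose_add_succ_mul (n k : ℕ) :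
    (n + k + 1).choose (k + 1) * n = (n + k).choose (k + 1) * (n + k + 1) := by
  simpa using (choose_mul_succ_eq (n + k) (k + 1)).symm

theorem choose_mul_choose_add_succ_add_choose_pred_mul (n k : ℕ) :
    n.choose (k + 1) * (n + k + 1).choose (k + 1) + (n - 1).choose (k + 1) * (n + k).choose (k + 1) =
      2 * (n.choose (k + 1) * (n + k).choose (k + 1)) := by
  rcases lt_or_ge n (k + 1) with hlt | hle
  · simp [choose_eq_zero_of_lt hlt, choose_eq_zero_of_lt (n.sub_le 1 |>.trans_lt hlt)]
  obtain ⟨m, rfl⟩ : ∃ m, n = m + 1 := ⟨n - 1, by omega⟩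
  obtain ⟨d, hd⟩ : ∃ d, m + 1 = k + 1 + d := exists_add_of_le hle
  have hup := choose_add_succ_mul (m + 1) k
  have hdown := choose_mul_succ_eq m (k + 1)
  rw [show m + 1 - (k + 1) = d by omega] at hdown
  rw [add_tsub_cancel_right]
  set A := (m + 1).choose (k + 1)
  set B := (m + 1 + k).choose (k + 1)
  apply Nat.eq_of_mul_eq_mul_right m.succ_pos
  calc (A * (m + 1 + k + 1).choose (k + 1) + m.choose (k + 1) * B) * (m + 1)
      = A * ((m + 1 + k + 1).choose (k + 1) * (m + 1)) + m.choose (k + 1) * (m + 1) * B := by ring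
    _ = A * B * (m + 1 + k + 1 + d) := by rw [hup, hdown]; ring
    _ = 2 * (A * B) * (m + 1) := by rw [show m + 1 + k + 1 + d = 2 * (m + 1) by omega]; ring

end Nat

theorem positive_B_half_sum_integral_general (n k : ℕ) :
    (1 / 2 : ℚ) * ((n.choose (k + 1) : ℚ) * ((n + k + 1).choose (k + 1) : ℚ) +
        ((n - 1).choose (k + 1) : ℚ) * ((n + k).choose (k + 1) : ℚ)) =
      ((n.choose (k + 1) * (n + k).choose (k + 1) : ℕ) : ℚ) := by
  have h := congrArg (fun x : ℕ => (x : ℚ)) (Nat.choose_mul_choose_add_succ_add_choose_pred_mul n k)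
  push_cast at h ⊢
  linarith

/-- For `n ≥ 2` and `0 ≤ k ≤ n - 1`, the rational number
`(1/2)·(C(n,k+1)·C(n+k+1,k+1) + C(n-1,k+1)·C(n+k,k+1))` is a nonnegative integer,
namely the natural number `C(n,k+1)·C(n+k,k+1)`. -/
theorem positive_B_half_sum_integral (n k : ℕ) (hn : 2 ≤ n) (hk : k ≤ n - 1) :
    (1 / 2 : ℚ) * ((n.choose (k + 1) : ℚ) * ((n + k + 1).choose (k + 1) : ℚ) +
        ((n - 1).choose (k + 1) : ℚ) * ((n + k).choose (k + 1) : ℚ)) =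
      ((n.choose (k + 1) * (n + k).choose (k + 1) : ℕ) : ℚ) :=
  positive_B_half_sum_integral_general n k
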